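/- If q > 1/2, 0 < r < 1, and 0 < μ ≤ 1, then every eigenvalue of the m×m system matrix A has strictly negative real part; hence the linear system ẋ = A x is asymptotically stable at the equilibrium 0. -/

import Mathlib

open Finset

/-- Treatment probability matrix entry `P(i,j)`. -/
noncomputable def Ptreat (m : ℕ) (q : ℝ) (i j : ℕ) : ℝ :=
  if i ≤ j then ((m - i).choose (j - i) : ℝ) * q ^ (j - i) * (1 - q) ^ (m - j) else 0

/-- Repair probability matrix entry `R(i,j)`. -/
noncomputable def Rrep (m : ℕ) (r : ℝ) (i j : ℕ) : ℝ :=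
  if i = m then (if j = m then 1 else 0)
  else if j ≤ i then (i.choose j : ℝ) * r ^ (i - j) * (1 - r) ^ j else 0

/-- One-day transition matrix `Π = P·R`. -/
noncomputable def Pimat (m : ℕ) (q r : ℝ) (i j : ℕ) : ℝ :=
  ∑ k ∈ Finset.range (m + 1), Ptreat m q i k * Rrep m r k j

/-- The `m × m` system matrix `A(q,r)` (0-based indices `i = t-1`). -/
noncomputable def Amat (m : ℕ) (q r μ : ℝ) : Matrix (Fin m) (Fin m) ℝ :=
  fun t k =>
    if t = k then
      (if (t : ℕ) = 0 then Pimat m q r 0 0 + μ * (1 - q) ^ m - 1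
       else Pimat m q r t t - 1)
    else Pimat m q r k t

/-!
Every off-diagonal entry of `A` is a transition probability of `Π`, hence nonnegative. Since the
rows of `Π` sum to one and `Π(i, m) = q ^ (m - i)`, the `t`-th column of `A` sums to
`μ (1 - q) ^ m - q ^ m` for `t = 0` and to `-q ^ (m - t)` otherwise, which is negative because
`1 - q < q`. Gershgorin's theorem, applied to `Aᵀ` (which has the same eigenvalues), puts each
eigenvalue `z` in a disc around `A t t` of radius `∑_{k ≠ t} A k t`, so `Re z` is at most a column
sum of `A`.
-/

namespace Matrix

variable {n : Type*} [Fintype n] [DecidableEq n]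

theorem hasEigenvalue_toLin'_transpose_iff {K : Type*} [Field K] {M : Matrix n n K} {z : K} :
    Module.End.HasEigenvalue (toLin' Mᵀ) z ↔ Module.End.HasEigenvalue (toLin' M) z := by
  simp only [Module.End.hasEigenvalue_iff_isRoot_charpoly, charpoly_toLin',
    charpoly_transpose]

theorem re_lt_zero_of_hasEigenvalue_of_sum_row_neg {B : Matrix n n ℝ}
    (hoff : ∀ i j, i ≠ j → 0 ≤ B i j) (hrow : ∀ i, ∑ j, B i j < 0) {z : ℂ}
    (hz : Module.End.HasEigenvalue (toLin' (B.map Complex.ofReal)) z) : z.re < 0 := by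
  obtain ⟨k, hk⟩ := eigenvalue_mem_ball hz
  rw [mem_closedBall_iff_norm] at hk
  have hradius : ∑ j ∈ univ.erase k, ‖B.map Complex.ofReal k j‖ = ∑ j ∈ univ.erase k, B k j :=
    sum_congr rfl fun j hj => by
      rw [map_apply, Complex.norm_real, Real.norm_of_nonneg (hoff k j (ne_of_mem_erase hj).symm)]
  rw [hradius, map_apply] at hk
  calc z.re = B k k + (z - B k k).re := by simp
    _ ≤ B k k + ∑ j ∈ univ.erase k, B k j := by
      linarith [Complex.re_le_norm (z - B k k)]
    _ = ∑ j, B k j := add_sum_erase _ _ (mem_univ k)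
    _ < 0 := hrow k

theorem re_lt_zero_of_hasEigenvalue_of_sum_col_neg {B : Matrix n n ℝ}
    (hoff : ∀ i j, i ≠ j → 0 ≤ B i j) (hcol : ∀ j, ∑ i, B i j < 0) {z : ℂ}
    (hz : Module.End.HasEigenvalue (toLin' (B.map Complex.ofReal)) z) : z.re < 0 :=
  re_lt_zero_of_hasEigenvalue_of_sum_row_neg (B := Bᵀ) (fun i j hij => hoff j i hij.symm) hcol
    (by rwa [transpose_map, hasEigenvalue_toLin'_transpose_iff])

end Matrix

section Transition

variable {m : ℕ} {q r : ℝ}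

theorem Ptreat_nonneg (hq0 : 0 ≤ q) (hq1 : q ≤ 1) (i j : ℕ) : 0 ≤ Ptreat m q i j := by
  unfold Ptreat
  split_ifs
  · exact mul_nonneg (by positivity) (pow_nonneg (sub_nonneg.2 hq1) _)
  · rfl

theorem Rrep_nonneg (hr0 : 0 ≤ r) (hr1 : r ≤ 1) (i j : ℕ) : 0 ≤ Rrep m r i j := by
  unfold Rrep
  split_ifs
  · exact zero_le_one
  · rfl
  · exact mul_nonneg (by positivity) (pow_nonneg (sub_nonneg.2 hr1) _)
  · rfl

theorem Pimat_nonneg (hq0 : 0 ≤ q) (hq1 : q ≤ 1) (hr0 : 0 ≤ r) (hr1 : r ≤ 1) (i j : ℕ) :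
    0 ≤ Pimat m q r i j :=
  sum_nonneg fun k _ => mul_nonneg (Ptreat_nonneg hq0 hq1 i k) (Rrep_nonneg hr0 hr1 k j)

theorem sum_Ptreat {i : ℕ} (hi : i ≤ m) : ∑ j ∈ range (m + 1), Ptreat m q i j = 1 := by
  obtain ⟨d, rfl⟩ := Nat.exists_eq_add_of_le hi
  have hlow : ∑ j ∈ range i, Ptreat (i + d) q i j = 0 :=
    sum_eq_zero fun j hj => if_neg (by simp only [mem_range] at hj; omega)
  have hhigh : ∀ s ∈ range (d + 1),
      Ptreat (i + d) q i (i + s) = q ^ s * (1 - q) ^ (d - s) * d.choose s := fun s _ => by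
    simp only [Ptreat, Nat.le_add_right, if_true, Nat.add_sub_cancel_left, Nat.add_sub_add_left]
    ring
  rw [show i + d + 1 = i + (d + 1) by ring, sum_range_add, hlow, zero_add, sum_congr rfl hhigh,
    ← add_pow, add_sub_cancel, one_pow]

theorem sum_Rrep {i : ℕ} (hi : i ≤ m) : ∑ j ∈ range (m + 1), Rrep m r i j = 1 := by
  rcases hi.eq_or_lt with rfl | hi
  · simp [Rrep]
  obtain ⟨d, rfl⟩ : ∃ d, m = i + 1 + d := ⟨m - (i + 1), by omega⟩
  have hlow : ∀ j ∈ range (i + 1),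
      Rrep (i + 1 + d) r i j = (1 - r) ^ j * r ^ (i - j) * i.choose j := fun j hj => by
    simp only [mem_range] at hj
    simp only [Rrep, if_neg (show i ≠ i + 1 + d by omega), if_pos (show j ≤ i by omega)]
    ring
  have hhigh : ∑ s ∈ range (d + 1), Rrep (i + 1 + d) r i (i + 1 + s) = 0 :=
    sum_eq_zero fun s _ => by
      simp only [Rrep, if_neg (show i ≠ i + 1 + d by omega), if_neg (show ¬i + 1 + s ≤ i by omega)]
  rw [show i + 1 + d + 1 = i + 1 + (d + 1) by ring, sum_range_add, hhigh, add_zero,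
    sum_congr rfl hlow, ← add_pow, sub_add_cancel, one_pow]

theorem sum_Pimat {i : ℕ} (hi : i ≤ m) : ∑ j ∈ range (m + 1), Pimat m q r i j = 1 := by
  simp only [Pimat]
  rw [sum_comm]
  simp_rw [← mul_sum]
  rw [sum_congr rfl fun k hk => by rw [sum_Rrep (Nat.lt_succ_iff.1 (mem_range.1 hk)), mul_one]]
  exact sum_Ptreat hi

theorem Pimat_last {i : ℕ} (hi : i ≤ m) : Pimat m q r i m = q ^ (m - i) := by
  rw [Pimat, sum_eq_single m]
  · simp [Ptreat, Rrep, hi]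
  · intro k hk hkm
    simp only [Rrep, if_neg hkm, if_neg (show ¬m ≤ k by simp only [mem_range] at hk; omega),
      mul_zero]
  · simp

theorem sum_Pimat_fin {i : ℕ} (hi : i ≤ m) :
    ∑ k : Fin m, Pimat m q r i k = 1 - q ^ (m - i) := by
  rw [Fin.sum_univ_eq_sum_range (Pimat m q r i), ← Pimat_last hi, ← sum_Pimat hi,
    sum_range_succ, add_sub_cancel_right]

end Transition

section SystemMatrix

variable {m : ℕ} {q r μ : ℝ}

theorem Amat_nonneg_of_ne (hq0 : 0 ≤ q) (hq1 : q ≤ 1) (hr0 : 0 ≤ r) (hr1 : r ≤ 1)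
    {k t : Fin m} (hkt : k ≠ t) : 0 ≤ Amat m q r μ k t := by
  rw [Amat, if_neg hkt]
  exact Pimat_nonneg hq0 hq1 hr0 hr1 _ _

theorem Amat_eq_Pimat_add (k t : Fin m) :
    Amat m q r μ k t = Pimat m q r t k +
      if k = t then (if (t : ℕ) = 0 then μ * (1 - q) ^ m else 0) - 1 else 0 := by
  unfold Amat
  rcases eq_or_ne k t with rfl | hkt
  · simp only [if_true]
    split_ifs with h0
    · rw [h0]; ring
    · ring
  · simp only [if_neg hkt, add_zero]

theorem sum_Amat_col (t : Fin m) :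
    ∑ k, Amat m q r μ k t = (if (t : ℕ) = 0 then μ * (1 - q) ^ m else 0) - q ^ (m - t) := by
  simp only [Amat_eq_Pimat_add, sum_add_distrib, sum_ite_eq', mem_univ, if_true,
    sum_Pimat_fin t.isLt.le]
  ring

theorem sum_Amat_col_neg (hq : 1 / 2 < q) (hq1 : q < 1) (hμ1 : μ ≤ 1) (t : Fin m) :
    ∑ k, Amat m q r μ k t < 0 := by
  rw [sum_Amat_col]
  split_ifs with h0
  · have hm : m ≠ 0 := t.pos.ne'
    have h1q : 0 ≤ 1 - q := by linarith
    have hlt : (1 - q) ^ m < q ^ m := pow_lt_pow_left₀ (by linarith) h1q hm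
    have hle : μ * (1 - q) ^ m ≤ (1 - q) ^ m :=
      mul_le_of_le_one_left (pow_nonneg h1q m) hμ1
    rw [h0, Nat.sub_zero]
    linarith
  · simpa using pow_pos (by linarith : 0 < q) (m - t)

end SystemMatrix

theorem system_matrix_hurwitz_general (m : ℕ) (q r μ : ℝ)
    (hq : 1 / 2 < q) (hq1 : q < 1) (hr0 : 0 < r) (hr1 : r < 1)
    (hμ1 : μ ≤ 1) :
    ∀ z : ℂ, (∃ v : Fin m → ℂ, v ≠ 0 ∧
        ((Amat m q r μ).map (fun x => (x : ℂ))).mulVec v = z • v) →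
      z.re < 0 := by
  rintro z ⟨v, hv, hAv⟩
  refine Matrix.re_lt_zero_of_hasEigenvalue_of_sum_col_neg (B := Amat m q r μ)
    (fun k t hkt => Amat_nonneg_of_ne (by linarith) hq1.le hr0.le hr1.le hkt)
    (sum_Amat_col_neg hq hq1 hμ1) ?_
  exact Module.End.hasEigenvalue_of_hasEigenvector
    ⟨Module.End.mem_eigenspace_iff.2 (by simpa using hAv), hv⟩

/-- for `q > 1/2` every eigenvalue of the system matrix `A`
has strictly negative real part. -/
theorem system_matrix_hurwitz (m : ℕ) (hm : 2 ≤ m) (q r μ : ℝ)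
    (hq : 1 / 2 < q) (hq1 : q < 1) (hr0 : 0 < r) (hr1 : r < 1)
    (hμ0 : 0 < μ) (hμ1 : μ ≤ 1) :
    ∀ z : ℂ, (∃ v : Fin m → ℂ, v ≠ 0 ∧
        ((Amat m q r μ).map (fun x => (x : ℂ))).mulVec v = z • v) →
      z.re < 0 :=
  system_matrix_hurwitz_general m q r μ hq hq1 hr0 hr1 hμ1
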